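/- For every k ≥ 3 and D ≥ 1, the limit α_{k,D} = lim_{n→∞} R_{k,D}(n)/n is a rational number. -/

import Mathlib

/-- `S` contains a `k`-term arithmetic progression with common difference `d`,
starting at some `i ≥ 1`. -/
def HasAPd (S : Finset ℕ) (k d : ℕ) : Prop :=
  ∃ i : ℕ, 1 ≤ i ∧ ∀ j < k, i + j * d ∈ S

/-- `S ⊆ {1,…,n}` and `S` contains no `k`-term AP with common difference `d`,
`1 ≤ d ≤ D`. -/
def AvoidsAP (k D n : ℕ) (S : Finset ℕ) : Prop :=
  S ⊆ Finset.Icc 1 n ∧ ∀ d : ℕ, 1 ≤ d → d ≤ D → ¬ HasAPd S k d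

/-- `R k D n` : maximum cardinality of such an `S`. -/
noncomputable def R (k D n : ℕ) : ℕ :=
  sSup {m : ℕ | ∃ S : Finset ℕ, AvoidsAP k D n S ∧ S.card = m}

/-! A progression with difference at most `D` spans at most `W = (k - 1) * D` consecutive
integers, so being AP-free is a condition on windows of length `W`. In an extremal set
`S ⊆ [1, n]` two of the windows ending at the first `2 ^ W + 1` admissible positions agree, say
at `t` and `t + p`. Then the block `[t, t + p)` of `S`, read mod `p`, is an AP-free periodic
pattern, and cutting the block out leaves an AP-free subset of `[1, n - p]`. Hence
`R(n) ≤ R(n - p) + β p`, where `β` is the largest density of an AP-free periodic pattern of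
period at most `W + 2 ^ W + 1`, while repeating a pattern of density `β` gives
`R(n) ≥ β n - O(1)`. So `R(n) = β n + O(1)` and `α = β` is a ratio of integers. -/

open Filter Topology Finset

theorem le_mul_add_of_le_sub_add {f : ℕ → ℝ} {β C : ℝ} {N : ℕ} (hβ : 0 ≤ β)
    (hsmall : ∀ n < N, f n ≤ C)
    (hstep : ∀ n ≥ N, ∃ p, 0 < p ∧ p ≤ n ∧ f n ≤ f (n - p) + β * p) (n : ℕ) :
    f n ≤ β * n + C := by
  induction n using Nat.strong_induction_on with
  | _ n ih =>
    rcases lt_or_ge n N with hn | hn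
    · nlinarith [hsmall n hn, (Nat.cast_nonneg n : (0 : ℝ) ≤ n)]
    · obtain ⟨p, hp, hpn, hfn⟩ := hstep n hn
      have := ih (n - p) (by omega)
      rw [Nat.cast_sub hpn] at this
      linarith

theorem tendsto_div_of_mul_sub_le_of_le_mul_add {f : ℕ → ℝ} {β C : ℝ}
    (hlower : ∀ n, β * n - C ≤ f n) (hupper : ∀ n, f n ≤ β * n + C) :
    Tendsto (fun n : ℕ => f n / n) atTop (𝓝 β) := by
  have hC : Tendsto (fun n : ℕ => C / n) atTop (𝓝 0) := tendsto_const_div_atTop_nhds_zero_nat C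
  refine tendsto_of_tendsto_of_tendsto_of_le_of_le' (by simpa using tendsto_const_nhds.sub hC)
    (by simpa using tendsto_const_nhds.add hC) ?_ ?_
  all_goals
    filter_upwards [eventually_gt_atTop 0] with n hn
    have hn : (0 : ℝ) < n := Nat.cast_pos.mpr hn
  · calc β - C / n = (β * n - C) / n := by field_simp
      _ ≤ f n / n := by gcongr; exact hlower n
  · calc f n / n ≤ (β * n + C) / n := by gcongr; exact hupper n
      _ = β + C / n := by field_simp

section
variable {k D n : ℕ} {S : Finset ℕ}

theorem AvoidsAP.card_le (h : AvoidsAP k D n S) : S.card ≤ n := by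
  simpa using card_le_card h.1

theorem AvoidsAP.card_le_R (h : AvoidsAP k D n S) : S.card ≤ R k D n :=
  le_csSup ⟨n, fun _ ⟨_, hS', hc⟩ => hc ▸ hS'.card_le⟩ ⟨S, h, rfl⟩

theorem R_le : R k D n ≤ n :=
  csSup_le' fun _ ⟨_, hS, hc⟩ => hc ▸ hS.card_le

theorem exists_avoidsAP_card_eq_R (hk : 1 ≤ k) : ∃ S, AvoidsAP k D n S ∧ S.card = R k D n := by
  have hempty : AvoidsAP k D n ∅ :=
    ⟨empty_subset _, fun _ _ _ ⟨_, _, hAP⟩ => by simpa using hAP 0 hk⟩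
  exact Nat.sSup_mem (s := {m | ∃ S, AvoidsAP k D n S ∧ S.card = m}) ⟨0, ∅, hempty, rfl⟩
    ⟨n, fun _ ⟨_, hS, hc⟩ => hc ▸ hS.card_le⟩

end

/-- The `p`-periodic set of naturals whose residues mod `p` lie in `T` contains no `k`-term
progression with common difference in `[1, D]`. -/
def PeriodicAvoidsAP (k D p : ℕ) (T : Finset ℕ) : Prop :=
  ∀ i d, 1 ≤ d → d ≤ D → ¬ ∀ j < k, (i + j * d) % p ∈ T

theorem div_mul_card_le_R {k D p : ℕ} {T : Finset ℕ} (hT : T ⊆ range p)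
    (hV : PeriodicAvoidsAP k D p T) (n : ℕ) : n / p * T.card ≤ R k D n := by
  set S := (range (n / p) ×ˢ T).image fun qr => qr.1 * p + qr.2 + 1
  have hmem : ∀ x ∈ S, 1 ≤ x ∧ x ≤ n ∧ (x - 1) % p ∈ T := by
    simp only [S, mem_image, mem_product, mem_range, Prod.exists]
    rintro _ ⟨q, r, ⟨hq, hr⟩, rfl⟩
    have hrp : r < p := mem_range.mp (hT hr)
    refine ⟨by omega, ?_, by simpa [Nat.add_mul_mod_self_right, Nat.mod_eq_of_lt hrp, add_comm]⟩
    nlinarith [Nat.div_mul_le_self n p]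
  have hcard : S.card = n / p * T.card := by
    rw [card_image_of_injOn, card_product, card_range]
    rintro ⟨q, r⟩ hqr ⟨q', r'⟩ hqr' h
    simp only [coe_product, Set.mem_prod, mem_coe, mem_range] at hqr hqr' h
    have hrp := mem_range.mp (hT hqr.2)
    have hrp' := mem_range.mp (hT hqr'.2)
    have hp : 0 < p := by omega
    have h : r + q * p = r' + q' * p := by omega
    have hq := congrArg (· / p) h
    have hr := congrArg (· % p) h
    simp only [Nat.add_mul_div_right _ _ hp, Nat.add_mul_mod_self_right, Nat.div_eq_of_lt hrp,
      Nat.div_eq_of_lt hrp', Nat.mod_eq_of_lt hrp, Nat.mod_eq_of_lt hrp', zero_add] at hq hr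
    exact Prod.ext hq hr
  refine hcard ▸ AvoidsAP.card_le_R ⟨fun x hx => mem_Icc.mpr ⟨(hmem x hx).1, (hmem x hx).2.1⟩, ?_⟩
  rintro d hd hdD ⟨i, hi, hAP⟩
  refine hV (i - 1) d hd hdD fun j hj => ?_
  simpa [Nat.sub_add_comm hi] using (hmem _ (hAP j hj)).2.2

def RepeatsAt (S : Finset ℕ) (W t p : ℕ) : Prop :=
  ∀ x, t - W ≤ x → x < t → (x ∈ S ↔ x + p ∈ S)

theorem exists_repeatsAt (S : Finset ℕ) (W : ℕ) :
    ∃ t p, W < t ∧ 0 < p ∧ t + p ≤ W + 2 ^ W + 1 ∧ RepeatsAt S W t p := by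
  classical
  -- pigeonhole over the `2 ^ W` possible contents of a window of length `W`
  have hcard : #(range W).powerset < #(Icc (W + 1) (W + 2 ^ W + 1)) := by simp; omega
  obtain ⟨t, ht, t', ht', hne, heq⟩ := exists_ne_map_eq_of_card_lt_of_maps_to hcard
    (f := fun t => (range W).filter fun a => t - W + a ∈ S)
    fun _ _ => mem_coe.mpr (mem_powerset.mpr (filter_subset _ _))
  wlog hlt : t < t' generalizing t t'
  · exact this t' ht' t ht hne.symm heq.symm (by omega)
  simp only [mem_Icc] at ht ht'
  refine ⟨t, t' - t, by omega, by omega, by omega, fun x hx hxt => ?_⟩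
  have := congrArg (x - (t - W) ∈ ·) heq
  simpa [show t - W + (x - (t - W)) = x by omega, show x - (t - W) < W by omega,
    show t' - W + (x - (t - W)) = x + (t' - t) by omega] using this

def excise (S : Finset ℕ) (t p : ℕ) : Finset ℕ :=
  (S.filter (· ∉ Ico t (t + p))).image fun x => if x < t then x else x - p

section
variable {S : Finset ℕ} {t p : ℕ}

theorem mem_excise {y : ℕ} : y ∈ excise S t p ↔ y < t ∧ y ∈ S ∨ t ≤ y ∧ y + p ∈ S := by
  simp only [excise, mem_image, mem_filter, mem_Ico]
  constructor
  · rintro ⟨x, ⟨hx, hxb⟩, rfl⟩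
    split_ifs with h
    · exact Or.inl ⟨h, hx⟩
    · exact Or.inr ⟨by omega, by rwa [Nat.sub_add_cancel (by omega)]⟩
  · rintro (⟨hy, hyS⟩ | ⟨hy, hyS⟩)
    · exact ⟨y, ⟨hyS, by omega⟩, if_pos hy⟩
    · exact ⟨y + p, ⟨hyS, by omega⟩, by rw [if_neg (by omega)]; omega⟩

theorem card_excise_add_card_filter :
    (excise S t p).card + (S.filter (· ∈ Ico t (t + p))).card = S.card := by
  rw [excise, card_image_of_injOn, add_comm, card_filter_add_card_filter_not]
  intro x hx y hy h
  simp only [coe_filter, mem_Ico, Set.mem_ofPred_eq] at hx hy h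
  split_ifs at h <;> omega

theorem avoidsAP_excise {k D n : ℕ} (hk : 1 ≤ k) (hS : AvoidsAP k D n S) (ht : 0 < t)
    (htp : t + p ≤ n) (hrep : RepeatsAt S ((k - 1) * D) t p) :
    AvoidsAP k D (n - p) (excise S t p) := by
  refine ⟨fun y hy => ?_, fun d hd hdD ⟨i, hi, hAP⟩ => ?_⟩
  · have hbound : ∀ x ∈ S, 1 ≤ x ∧ x ≤ n := fun x hx => mem_Icc.mp (hS.1 hx)
    rw [mem_Icc]
    rcases mem_excise.mp hy with ⟨_, hyS⟩ | ⟨_, hyS⟩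
    · have := hbound y hyS; omega
    · have := hbound _ hyS; omega
  have hspan : (k - 1) * d ≤ (k - 1) * D := Nat.mul_le_mul_left _ hdD
  have hterm : ∀ j < k, j * d ≤ (k - 1) * d := fun j hj => Nat.mul_le_mul_right _ (by omega)
  rcases lt_or_ge (i + (k - 1) * d) t with hlast | hlast
  · refine hS.2 d hd hdD ⟨i, hi, fun j hj => ?_⟩
    rcases mem_excise.mp (hAP j hj) with ⟨_, h⟩ | ⟨h, _⟩
    · exact h
    · have := hterm j hj; omega
  · -- the progression reaches past `t`, so it started inside the window and repeats `p` later
    refine hS.2 d hd hdD ⟨i + p, by omega, fun j hj => ?_⟩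
    rw [add_right_comm]
    rcases mem_excise.mp (hAP j hj) with ⟨hlt, h⟩ | ⟨_, h⟩
    · exact (hrep _ (by omega) hlt).mp h
    · exact h

def blockResidues (S : Finset ℕ) (t p : ℕ) : Finset ℕ :=
  (S.filter (· ∈ Ico t (t + p))).image (· % p)

theorem card_blockResidues :
    (blockResidues S t p).card = (S.filter (· ∈ Ico t (t + p))).card :=
  card_image_of_injOn fun _ hx _ hy =>
    Nat.mod_injOn_Ico t p (by simpa using (mem_filter.mp hx).2)
      (by simpa using (mem_filter.mp hy).2)

theorem blockResidues_subset_range (hp : 0 < p) : blockResidues S t p ⊆ range p := by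
  intro r hr
  obtain ⟨x, -, rfl⟩ := mem_image.mp hr
  exact mem_range.mpr (Nat.mod_lt x hp)

theorem RepeatsAt.mem_iff_mod_mem_blockResidues {W : ℕ} (hrep : RepeatsAt S W t p) (hp : 0 < p)
    {x : ℕ} (hx : t - W ≤ x) (hxp : x < t + p) : x ∈ S ↔ x % p ∈ blockResidues S t p := by
  induction hm : t + p - x using Nat.strong_induction_on generalizing x with
  | _ m ih =>
  rcases lt_or_ge x t with hxt | hxt
  · rw [hrep x hx hxt, ih _ (by omega) (by omega) (by omega) rfl, Nat.add_mod_right]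
  · have hxb : x ∈ Ico t (t + p) := mem_Ico.mpr ⟨hxt, hxp⟩
    refine ⟨fun hxS => mem_image.mpr ⟨x, mem_filter.mpr ⟨hxS, hxb⟩, rfl⟩, fun h => ?_⟩
    obtain ⟨y, hy, hyx⟩ := mem_image.mp h
    obtain ⟨hyS, hyb⟩ := mem_filter.mp hy
    rwa [Nat.mod_injOn_Ico t p (by simpa using hyb) (by simpa using hxb) hyx] at hyS

theorem periodicAvoidsAP_blockResidues {k D n : ℕ} (hk : 1 ≤ k) (hS : AvoidsAP k D n S)
    (ht : (k - 1) * D < t) (hp : 0 < p) (hrep : RepeatsAt S ((k - 1) * D) t p) :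
    PeriodicAvoidsAP k D p (blockResidues S t p) := by
  intro i d hd hdD hAP
  have hspan : (k - 1) * d ≤ (k - 1) * D := Nat.mul_le_mul_left _ hdD
  -- lift the progression of residues to the progression in `ℕ` ending at `y` in the block
  obtain ⟨y, hy, hyi⟩ := mem_image.mp (hAP (k - 1) (by omega))
  have hyb := mem_Ico.mp (mem_filter.mp hy).2
  refine hS.2 d hd hdD ⟨y - (k - 1) * d, by omega, fun j hj => ?_⟩
  have hsplit : (k - 1) * d = j * d + (k - 1 - j) * d := by rw [← add_mul]; congr 1; omega
  have hmod : (y - (k - 1) * d + j * d) % p = (i + j * d) % p := by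
    refine Nat.ModEq.add_right_cancel' ((k - 1 - j) * d) ?_
    rw [show y - (k - 1) * d + j * d + (k - 1 - j) * d = y by omega,
      show i + j * d + (k - 1 - j) * d = i + (k - 1) * d by omega]
    exact hyi
  rw [hrep.mem_iff_mod_mem_blockResidues hp (by omega) (by omega), hmod]
  exact hAP j hj

end

theorem exists_R_le_R_sub_add {k D : ℕ} (hk : 1 ≤ k) :
    ∃ N, 0 < N ∧ ∀ n ≥ N, ∃ p T, 0 < p ∧ p ≤ N ∧ T ⊆ range p ∧ PeriodicAvoidsAP k D p T ∧
      R k D n ≤ R k D (n - p) + T.card := by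
  refine ⟨(k - 1) * D + 2 ^ ((k - 1) * D) + 1, Nat.succ_pos _, fun n hn => ?_⟩
  obtain ⟨S, hS, hSR⟩ := exists_avoidsAP_card_eq_R (D := D) (n := n) hk
  obtain ⟨t, p, ht, hp, htp, hrep⟩ := exists_repeatsAt S ((k - 1) * D)
  refine ⟨p, blockResidues S t p, hp, by omega, blockResidues_subset_range hp,
    periodicAvoidsAP_blockResidues hk hS ht hp hrep, ?_⟩
  have := (avoidsAP_excise hk hS (by omega) (by omega) hrep).card_le_R
  rw [card_blockResidues, ← hSR, ← card_excise_add_card_filter (t := t) (p := p)]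
  omega

theorem exists_max_periodicDensity {k D P : ℕ} (hk : 1 ≤ k) (hP : 0 < P) :
    ∃ p T, (0 < p ∧ p ≤ P ∧ T ⊆ range p ∧ PeriodicAvoidsAP k D p T) ∧
      ∀ p' T', 0 < p' → p' ≤ P → T' ⊆ range p' → PeriodicAvoidsAP k D p' T' →
        (T'.card : ℝ) / p' ≤ T.card / p := by
  classical
  set s := (Icc 1 P).sigma fun p => (range p).powerset.filter (PeriodicAvoidsAP k D p)
  have mem_s : ∀ p T, ⟨p, T⟩ ∈ s ↔ 0 < p ∧ p ≤ P ∧ T ⊆ range p ∧ PeriodicAvoidsAP k D p T := by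
    simp [s, Nat.one_le_iff_ne_zero, Nat.pos_iff_ne_zero, and_assoc]
  have hempty : PeriodicAvoidsAP k D 1 ∅ := fun _ _ _ _ h => by simpa using h 0 hk
  obtain ⟨⟨p, T⟩, hpT, hmax⟩ := s.exists_max_image (fun x => (x.2.card : ℝ) / x.1)
    ⟨⟨1, ∅⟩, (mem_s 1 ∅).mpr ⟨one_pos, hP, empty_subset _, hempty⟩⟩
  exact ⟨p, T, (mem_s p T).mp hpT, fun p' T' h₁ h₂ h₃ h₄ =>
    hmax ⟨p', T'⟩ ((mem_s p' T').mpr ⟨h₁, h₂, h₃, h₄⟩)⟩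

theorem periodicDensity_mul_sub_le_R {k D p : ℕ} {T : Finset ℕ} (hp : 0 < p) (hT : T ⊆ range p)
    (hV : PeriodicAvoidsAP k D p T) (n : ℕ) : (T.card / p : ℝ) * n - p ≤ R k D n := by
  have hp' : (0 : ℝ) < p := Nat.cast_pos.mpr hp
  have hTp : (T.card : ℝ) ≤ p := by exact_mod_cast (card_le_card hT).trans (card_range p).le
  have hfloor : (n : ℝ) / p - 1 ≤ (n / p : ℕ) := by
    have hdiv : (p : ℝ) * (n / p : ℕ) + (n % p : ℕ) = n := by exact_mod_cast Nat.div_add_mod n p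
    have hmod : ((n % p : ℕ) : ℝ) < p := by exact_mod_cast Nat.mod_lt n hp
    rw [sub_le_iff_le_add, div_le_iff₀ hp']
    nlinarith
  calc (T.card / p : ℝ) * n - p ≤ ((n : ℝ) / p - 1) * T.card := by
        linarith [show ((n : ℝ) / p - 1) * T.card = T.card / p * n - T.card by ring]
    _ ≤ (n / p : ℕ) * T.card := by gcongr
    _ ≤ R k D n := by exact_mod_cast div_mul_card_le_R hT hV n

theorem R_density_rational_general (k D : ℕ) (hk : 3 ≤ k) :
    ∃ α : ℚ, Filter.Tendsto (fun n : ℕ => (R k D n : ℝ) / n) Filter.atTop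
      (nhds (α : ℝ)) := by
  obtain ⟨N, hN, hstep⟩ := exists_R_le_R_sub_add (k := k) (D := D) (by omega)
  obtain ⟨p, T, ⟨hp, hpN, hT, hV⟩, hmax⟩ :=
    exists_max_periodicDensity (k := k) (D := D) (by omega) hN
  refine ⟨T.card / p, ?_⟩
  push_cast
  refine tendsto_div_of_mul_sub_le_of_le_mul_add (C := N) (fun n => ?_)
    (le_mul_add_of_le_sub_add (N := N) (by positivity) (fun n hn => ?_) fun n hn => ?_)
  · have : (p : ℝ) ≤ N := by exact_mod_cast hpN
    linarith [periodicDensity_mul_sub_le_R hp hT hV n]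
  · exact_mod_cast (R_le.trans_lt hn).le
  · obtain ⟨p', T', hp', hp'N, hT', hV', hR⟩ := hstep n hn
    refine ⟨p', hp', by omega, ?_⟩
    have hT' := (div_le_iff₀ (by positivity)).mp (hmax p' T' hp' hp'N hT' hV')
    calc (R k D n : ℝ) ≤ R k D (n - p') + T'.card := by exact_mod_cast hR
      _ ≤ R k D (n - p') + T.card / p * p' := by linarith

theorem R_density_rational (k D : ℕ) (hk : 3 ≤ k) (hD : 1 ≤ D) :
    ∃ α : ℚ, Filter.Tendsto (fun n : ℕ => (R k D n : ℝ) / n) Filter.atTop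
      (nhds (α : ℝ)) :=
  R_density_rational_general k D hk
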